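/- A twig query q is satisfiable by a disjunction-free multiplicity schema S (some tree satisfies both S and q) if and only if q can be embedded in the dependency graph G_S of S. -/

import Mathlib

open scoped Classical

variable {α : Type}

/-- Unordered words: multisets of symbols, as occurrence-count functions. -/
abbrev UWord (α : Type) := α → ℕ

/-- Multiplicities `*`, `+`, `?`, `0`, `1`. -/
inductive Mult : Type where
  | zero | one | opt | plus | star
deriving DecidableEq

/-- Interpretation of multiplicities as sets of natural numbers. -/
def Mult.sem : Mult → Set ℕ
  | .zero => {0}
  | .one => {1}
  | .opt => {0, 1}
  | .plus => {n | 0 < n}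
  | .star => Set.univ

/-- A disjunction `a₁^{M₁} | … | a_k^{M_k}`. -/
abbrev Disj (α : Type) := List (α × Mult)

/-- A disjunctive multiplicity expression `D₁^{M₁} ⊎ … ⊎ D_n^{M_n}`. -/
abbrev DME (α : Type) := List (Disj α × Mult)

/-- Language of `a^M`. -/
def singleLang (a : α) (m : Mult) : Set (UWord α) :=
  {w | w a ∈ m.sem ∧ ∀ b, b ≠ a → w b = 0}

/-- Language of a disjunction. -/
def disjLang (D : Disj α) : Set (UWord α) :=
  {w | ∃ p ∈ D, w ∈ singleLang p.1 p.2}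

/-- Pointwise (multiset) sum of a list of unordered words. -/
def sumWords (ws : List (UWord α)) : UWord α := fun a => (ws.map (fun u => u a)).sum

/-- Language of `D^M`. -/
def powLang (L : Set (UWord α)) (m : Mult) : Set (UWord α) :=
  {w | ∃ ws : List (UWord α), ws.length ∈ m.sem ∧ (∀ u ∈ ws, u ∈ L) ∧ w = sumWords ws}

/-- Language of a disjunctive multiplicity expression. -/
def dmeLang (E : DME α) : Set (UWord α) :=
  {w | ∃ ws : List (UWord α),
      List.Forall₂ (fun p u => u ∈ powLang (disjLang p.1) p.2) E ws ∧ w = sumWords ws}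

/-- Symbols occurring in a disjunctive multiplicity expression. -/
def dmeSymbols (E : DME α) : List α := E.flatMap (fun p => p.1.map Prod.fst)

/-- Normalized disjunctive multiplicity expression (each symbol occurs at most once,
each disjunction nonempty, and the two normal-form conditions of the paper). -/
def Normalized (E : DME α) : Prop :=
  (dmeSymbols E).Nodup ∧
  ∀ p ∈ E, p.1 ≠ [] ∧
    (p.2 ≠ Mult.one → p.2 = Mult.plus ∧ ∀ q ∈ p.1, q.2 = Mult.one) ∧
    ((∃ q ∈ p.1, (0 : ℕ) ∈ q.2.sem) → ∀ q ∈ p.1, (0 : ℕ) ∈ q.2.sem)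

/-- Conflicting pairs of siblings `C_E`. -/
def CE (E : DME α) : Set (α × α) :=
  {p | ¬ ∃ w ∈ dmeLang E, w p.1 ≠ 0 ∧ w p.2 ≠ 0}

/-- Extended cardinality map `N_E`. -/
def NE (E : DME α) : Set (α × ℕ) :=
  {p | ∃ w ∈ dmeLang E, w p.1 = p.2}

/-- Sets of required symbols `P_E`. -/
def PE (E : DME α) : Set (Set α) :=
  {X | ∀ w ∈ dmeLang E, ∃ a ∈ X, w a ≠ 0}

/-- Consistency of an unordered word with a characterizing triple. -/
def ConsTriple (w : UWord α) (C : Set (α × α)) (N : Set (α × ℕ)) (P : Set (Set α)) : Prop :=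
  (∀ p ∈ C, ¬ (w p.1 ≠ 0 ∧ w p.2 ≠ 0)) ∧
  (∀ a, (a, w a) ∈ N) ∧
  (∀ X ∈ P, ∃ a ∈ X, w a ≠ 0)

/-- Language of a disjunction-free multiplicity expression given as a list of
symbol/multiplicity pairs. -/
def dfLang (l : List (α × Mult)) : Set (UWord α) :=
  {w | (∀ p ∈ l, w p.1 ∈ p.2.sem) ∧ ∀ b, b ∉ l.map Prod.fst → w b = 0}

/-- Finite unordered trees. -/
inductive UTree (α : Type) : Type where
  | node : α → List (UTree α) → UTree α

def UTree.lab : UTree α → α | .node a _ => a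

def UTree.children : UTree α → List (UTree α) | .node _ ts => ts

/-- Twig queries: labels in `Σ ∪ {⋆}` (wildcard = `none`); each child subquery is tagged
with `false` for a child edge and `true` for a descendant edge. -/
inductive Twig (α : Type) : Type where
  | node : Option α → List (Twig α × Bool) → Twig α

/-- Proper subtree (proper descendant) relation. -/
inductive StrictDesc : UTree α → UTree α → Prop where
  | child {s t : UTree α} : s ∈ t.children → StrictDesc s t
  | step {s u t : UTree α} : StrictDesc s u → u ∈ t.children → StrictDesc s t

/-- `Sat t q`: the twig query `q` can be embedded in the tree `t`
(root to root, child edges to child edges, descendant edges to proper descendants,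
labels preserved up to wildcard). -/
def Sat : UTree α → Twig α → Prop
  | t, .node l qs =>
      (∀ x ∈ l, x = t.lab) ∧
      ∀ p ∈ qs, (p.2 = false → ∃ t' ∈ t.children, Sat t' p.1) ∧
                (p.2 = true → ∃ t', StrictDesc t' t ∧ Sat t' p.1)
termination_by t q => sizeOf q
decreasing_by
  all_goals
    obtain ⟨q', b'⟩ := p
    have h1 : sizeOf ((q', b') : Twig α × Bool) < sizeOf qs := List.sizeOf_lt_of_mem (by assumption)
    simp at h1 ⊢
    omega

/-- `TEmb t' t` : the tree `t'` can be embedded in the tree `t` (root-, child-, and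
label-preserving). -/
def TEmb : UTree α → UTree α → Prop
  | .node a ts', t => t.lab = a ∧ ∀ s' ∈ ts', ∃ s ∈ t.children, TEmb s' s

/-- `QGEmb E a q` : the twig query `q` can be embedded in the rooted graph with edge
relation `E` at root `a`. -/
def QGEmb (E : α → α → Prop) : α → Twig α → Prop
  | a, .node l qs =>
      (∀ x ∈ l, x = a) ∧
      ∀ p ∈ qs, (p.2 = false → ∃ b, E a b ∧ QGEmb E b p.1) ∧
                (p.2 = true → ∃ b, Relation.TransGen E a b ∧ QGEmb E b p.1)
termination_by a q => sizeOf q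
decreasing_by
  all_goals
    obtain ⟨q', b'⟩ := p
    have h1 : sizeOf ((q', b') : Twig α × Bool) < sizeOf qs := List.sizeOf_lt_of_mem (by assumption)
    simp at h1 ⊢
    omega

/-- Labeled paths of a tree: sequences of labels along root-to-node paths. -/
inductive IsLabPath : UTree α → List α → Prop where
  | root {a : α} {ts : List (UTree α)} : IsLabPath (UTree.node a ts) [a]
  | cons {a : α} {ts : List (UTree α)} {s : UTree α} {p : List α} :
      s ∈ ts → IsLabPath s p → IsLabPath (UTree.node a ts) (a :: p)

/-- Paths of a rooted graph: nonempty vertex sequences starting at the root and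
following edges. -/
def IsGPath (E : α → α → Prop) (root : α) (p : List α) : Prop :=
  p ≠ [] ∧ p.head? = some root ∧ p.Chain' E

/-- The unfolding of a rooted graph, truncated at depth `n`.  For a graph with no cycle
reachable from the root, taking `n = Fintype.card α` yields the full unfolding. -/
noncomputable def unfoldG [Fintype α] (E : α → α → Prop) : ℕ → α → UTree α
  | 0, a => .node a []
  | n + 1, a => .node a (((Finset.univ.filter fun b => E a b).toList).map (unfoldG E n))

/-- Number of leaves of a tree. -/
def leafCount : UTree α → ℕ
  | .node _ ts => if ts.isEmpty then 1 else (ts.attach.map (fun s => leafCount s.1)).sum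
decreasing_by
  have h1 := List.sizeOf_lt_of_mem s.2
  simp
  omega

/-- Disjunction-free multiplicity schema: a root label together with, for each label `a`,
a disjunction-free multiplicity expression given as the multiplicity `R a b` of every
symbol `b` (`Mult.zero` meaning `b` does not occur). -/
structure MS (α : Type) where
  root : α
  R : α → α → Mult

/-- Every node's children-label multiset matches the rule for the node's label. -/
inductive LocalOK [DecidableEq α] (R : α → α → Mult) : UTree α → Prop where
  | node {a : α} {ts : List (UTree α)} :
      (∀ b, ((ts.map UTree.lab).count b) ∈ (R a b).sem) →
      (∀ s ∈ ts, LocalOK R s) →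
      LocalOK R (UTree.node a ts)

/-- A tree satisfies a disjunction-free multiplicity schema. -/
def SatS [DecidableEq α] (S : MS α) (t : UTree α) : Prop :=
  t.lab = S.root ∧ LocalOK S.R t

/-- Edges of the universal dependency graph: `b` occurs in `R a` with multiplicity `+` or `1`. -/
def uEdge (S : MS α) (a b : α) : Prop := S.R a b = Mult.plus ∨ S.R a b = Mult.one

/-- Edges of the dependency graph: `b` occurs in `R a` with multiplicity in `{*,+,?,1}`. -/
def dEdge (S : MS α) (a b : α) : Prop := S.R a b ≠ Mult.zero

/-- A simulation of the rooted graph `(α, root, E)` in the tree `t`. -/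
def IsSimulation (E : α → α → Prop) (root : α) (t : UTree α) (R : α → UTree α → Prop) : Prop :=
  R root t ∧ (∀ a s, R a s → s.lab = a) ∧
  (∀ a s, R a s → ∀ b, E a b → ∃ s' ∈ s.children, R b s')

/-- One fuse step: two sibling nodes with the same label are merged into a single node
whose children are the children of both (applied anywhere in the tree). -/
inductive Fuse : UTree α → UTree α → Prop where
  | here {a b : α} {l₁ l₂ l₃ cs₁ cs₂ : List (UTree α)} :
      Fuse (UTree.node a (l₁ ++ UTree.node b cs₁ :: l₂ ++ UTree.node b cs₂ :: l₃))
           (UTree.node a (l₁ ++ UTree.node b (cs₁ ++ cs₂) :: l₂ ++ l₃))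
  | there {a : α} {s s' : UTree α} {l₁ l₂ : List (UTree α)} :
      Fuse s s' → Fuse (UTree.node a (l₁ ++ s :: l₂)) (UTree.node a (l₁ ++ s' :: l₂))

/-- One add step: an arbitrary new subtree is attached as an additional child of some
node of the tree. -/
inductive AddOp : UTree α → UTree α → Prop where
  | here {a : α} {s : UTree α} {l : List (UTree α)} :
      AddOp (UTree.node a l) (UTree.node a (s :: l))
  | there {a : α} {s s' : UTree α} {l₁ l₂ : List (UTree α)} :
      AddOp s s' → AddOp (UTree.node a (l₁ ++ s :: l₂)) (UTree.node a (l₁ ++ s' :: l₂))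

/-! A tree satisfying `S` only has parent–child pairs that are edges of `G_S`, so an embedding
of `q` into such a tree projects to an embedding into `G_S`. Conversely, since `S` is pruned,
every label `a` has a finite minimal tree built from the edges of the universal dependency graph
only (these are the children that `S` forces). Unfolding `G_S` from `a` to depth `n` and grafting
minimal trees at the leaves gives a tree satisfying `S` that, for all sufficiently large `n`,
contains every finite piece of the unfolding of `G_S`, hence admits every embedding of `q`. -/

open Filter Relation

theorem Twig.sizeOf_lt_of_mem {l : Option α} {qs : List (Twig α × Bool)} {p : Twig α × Bool}
    (hp : p ∈ qs) : sizeOf p.1 < sizeOf (Twig.node l qs) := by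
  have := List.sizeOf_lt_of_mem hp
  obtain ⟨q, b⟩ := p
  simp only [Prod.mk.sizeOf_spec, Twig.node.sizeOf_spec] at this ⊢
  omega

section Forward

variable [DecidableEq α] {S : MS α}

theorem LocalOK.of_mem_children {t s : UTree α} (ht : LocalOK S.R t) (hs : s ∈ t.children) :
    LocalOK S.R s := by
  cases ht with
  | node _ hcs => exact hcs s hs

theorem LocalOK.dEdge_of_mem_children {t s : UTree α} (ht : LocalOK S.R t)
    (hs : s ∈ t.children) : dEdge S t.lab s.lab := by
  cases ht with
  | @node a ts hcount _ =>
    intro hzero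
    have hpos : 0 < (ts.map UTree.lab).count s.lab :=
      List.count_pos_iff.2 (List.mem_map_of_mem hs)
    have hcount := hcount s.lab
    rw [show S.R a s.lab = .zero from hzero] at hcount
    exact hpos.ne' hcount

theorem LocalOK.of_strictDesc {s t : UTree α} (h : StrictDesc s t) (ht : LocalOK S.R t) :
    LocalOK S.R s := by
  induction h with
  | child hs => exact ht.of_mem_children hs
  | step _ hu ih => exact ih (ht.of_mem_children hu)

theorem LocalOK.transGen_dEdge_of_strictDesc {s t : UTree α} (h : StrictDesc s t)
    (ht : LocalOK S.R t) : TransGen (dEdge S) t.lab s.lab := by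
  induction h with
  | child hs => exact .single (ht.dEdge_of_mem_children hs)
  | step _ hu ih =>
    exact .head (ht.dEdge_of_mem_children hu) (ih (ht.of_mem_children hu))

theorem qgEmb_of_localOK_of_sat : ∀ {t : UTree α} (q : Twig α),
    LocalOK S.R t → Sat t q → QGEmb (dEdge S) t.lab q
  | t, .node l qs, ht, hsat => by
    rw [Sat] at hsat
    obtain ⟨hl, hqs⟩ := hsat
    rw [QGEmb]
    refine ⟨hl, fun p hp => ⟨fun hchild => ?_, fun hdesc => ?_⟩⟩
    · obtain ⟨s, hs, hsat⟩ := (hqs p hp).1 hchild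
      exact ⟨s.lab, ht.dEdge_of_mem_children hs,
        qgEmb_of_localOK_of_sat p.1 (ht.of_mem_children hs) hsat⟩
    · obtain ⟨s, hs, hsat⟩ := (hqs p hp).2 hdesc
      exact ⟨s.lab, ht.transGen_dEdge_of_strictDesc hs,
        qgEmb_of_localOK_of_sat p.1 (ht.of_strictDesc hs) hsat⟩
termination_by _ q => sizeOf q
decreasing_by all_goals exact Twig.sizeOf_lt_of_mem hp

end Forward

section Backward

theorem localOK_node_of_map_lab_eq_toList [DecidableEq α] {R : α → α → Mult} {a : α}
    {cs : List (UTree α)} {s : Finset α} (hlab : cs.map UTree.lab = s.toList)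
    (hmem : ∀ b ∈ s, 1 ∈ (R a b).sem) (hnotMem : ∀ b ∉ s, 0 ∈ (R a b).sem)
    (hcs : ∀ c ∈ cs, LocalOK R c) : LocalOK R (.node a cs) := by
  refine .node (fun b => ?_) hcs
  rw [hlab]
  by_cases hb : b ∈ s
  · rw [List.count_eq_one_of_mem s.nodup_toList (s.mem_toList.2 hb)]
    exact hmem b hb
  · rw [List.count_eq_zero_of_not_mem (mt s.mem_toList.1 hb)]
    exact hnotMem b hb

variable (S : MS α)

theorem one_mem_sem_of_dEdge {a b : α} (h : dEdge S a b) : 1 ∈ (S.R a b).sem := by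
  cases hR : S.R a b <;> simp_all [Mult.sem, dEdge]

theorem zero_mem_sem_of_not_uEdge {a b : α} (h : ¬ uEdge S a b) : 0 ∈ (S.R a b).sem := by
  cases hR : S.R a b <;> simp_all [Mult.sem, uEdge]

variable [Fintype α]

theorem wellFounded_swap_uEdge (hpruned : ∀ a : α, ¬ TransGen (uEdge S) a a) :
    WellFounded (Function.swap (uEdge S)) :=
  have : Std.Irrefl (TransGen (Function.swap (uEdge S))) :=
    ⟨fun a h => hpruned a (transGen_swap.1 h)⟩
  (Finite.wellFounded_of_trans_of_irrefl (TransGen (Function.swap (uEdge S)))).mono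
    fun _ _ => .single

variable (hwf : WellFounded (Function.swap (uEdge S)))

noncomputable def minTree : α → UTree α :=
  hwf.fix fun a ih => .node a
    ((Finset.univ.filter (uEdge S a)).toList.attach.map
      fun b => ih b.1 (by simpa using b.2))

theorem minTree_eq (a : α) : minTree S hwf a = .node a
    ((Finset.univ.filter (uEdge S a)).toList.attach.map fun b => minTree S hwf b.1) := by
  rw [minTree, hwf.fix_eq]

theorem lab_minTree (a : α) : (minTree S hwf a).lab = a := by
  rw [minTree_eq]
  rfl

noncomputable def depTree : ℕ → α → UTree α
  | 0, a => minTree S hwf a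
  | n + 1, a => .node a ((Finset.univ.filter (dEdge S a)).toList.map (depTree n))

theorem lab_depTree (n : ℕ) (a : α) : (depTree S hwf n a).lab = a := by
  cases n with
  | zero => exact lab_minTree S hwf a
  | succ n => rfl

theorem depTree_mem_children {a b : α} (hab : dEdge S a b) (n : ℕ) :
    depTree S hwf n b ∈ (depTree S hwf (n + 1) a).children :=
  List.mem_map_of_mem (by simpa using hab)

theorem eventually_exists_mem_children_depTree {P : UTree α → Prop} {a b : α}
    (hab : dEdge S a b) (h : ∀ᶠ m in atTop, P (depTree S hwf m b)) :
    ∀ᶠ n in atTop, ∃ t ∈ (depTree S hwf n a).children, P t := by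
  obtain ⟨m₀, hm₀⟩ := eventually_atTop.1 h
  refine eventually_atTop.2 ⟨m₀ + 1, fun n hn => ?_⟩
  obtain ⟨m, rfl⟩ : ∃ m, n = m + 1 := ⟨n - 1, by omega⟩
  exact ⟨_, depTree_mem_children S hwf hab m, hm₀ m (by omega)⟩

theorem eventually_exists_strictDesc_depTree {P : UTree α → Prop} {a b : α}
    (hab : TransGen (dEdge S) a b) (h : ∀ᶠ m in atTop, P (depTree S hwf m b)) :
    ∀ᶠ n in atTop, ∃ t, StrictDesc t (depTree S hwf n a) ∧ P t := by
  induction hab using TransGen.head_induction_on with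
  | single hab =>
    filter_upwards [eventually_exists_mem_children_depTree S hwf hab h] with n ⟨t, ht, hP⟩
    exact ⟨t, .child ht, hP⟩
  | head hac _ ih =>
    filter_upwards [eventually_exists_mem_children_depTree S hwf
      (P := fun s => ∃ t, StrictDesc t s ∧ P t) hac ih]
      with n ⟨s, hs, t, hts, hP⟩
    exact ⟨t, .step hts hs, hP⟩

theorem eventually_sat_depTree_of_qgEmb : ∀ (q : Twig α) {a : α},
    QGEmb (dEdge S) a q → ∀ᶠ n in atTop, Sat (depTree S hwf n a) q
  | .node l qs, a, h => by
    rw [QGEmb] at h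
    obtain ⟨hl, hqs⟩ := h
    have hsub : ∀ p ∈ qs, ∀ᶠ n in atTop,
        (p.2 = false → ∃ t ∈ (depTree S hwf n a).children, Sat t p.1) ∧
        (p.2 = true → ∃ t, StrictDesc t (depTree S hwf n a) ∧ Sat t p.1) := by
      intro p hp
      refine (eventually_imp_distrib_left.2 fun hchild => ?_).and
        (eventually_imp_distrib_left.2 fun hdesc => ?_)
      · obtain ⟨b, hab, hb⟩ := (hqs p hp).1 hchild
        exact eventually_exists_mem_children_depTree S hwf hab
          (eventually_sat_depTree_of_qgEmb p.1 hb)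
      · obtain ⟨b, hab, hb⟩ := (hqs p hp).2 hdesc
        exact eventually_exists_strictDesc_depTree S hwf hab
          (eventually_sat_depTree_of_qgEmb p.1 hb)
    filter_upwards [(eventually_all_finite qs.finite_toSet).2 hsub] with n hn
    rw [Sat, lab_depTree]
    exact ⟨hl, hn⟩
termination_by q => sizeOf q
decreasing_by all_goals exact Twig.sizeOf_lt_of_mem hp

variable [DecidableEq α]

theorem localOK_minTree (a : α) : LocalOK S.R (minTree S hwf a) := by
  induction a using hwf.induction with
  | _ a ih =>
    rw [minTree_eq]
    refine localOK_node_of_map_lab_eq_toList (s := Finset.univ.filter (uEdge S a)) ?_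
      (fun b hb => one_mem_sem_of_dEdge S ?_) (fun b hb => zero_mem_sem_of_not_uEdge S ?_) ?_
    · simp [Function.comp_def, lab_minTree]
    · rcases (Finset.mem_filter.1 hb).2 with h | h <;> simp [dEdge, h]
    · simpa using hb
    · simp only [List.mem_map, List.mem_attach, true_and, Subtype.exists, Finset.mem_toList,
        Finset.mem_filter, Finset.mem_univ]
      rintro _ ⟨b, hb, rfl⟩
      exact ih b hb

theorem localOK_depTree (n : ℕ) (a : α) : LocalOK S.R (depTree S hwf n a) := by
  induction n generalizing a with
  | zero => exact localOK_minTree S hwf a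
  | succ n ih =>
    refine localOK_node_of_map_lab_eq_toList (s := Finset.univ.filter (dEdge S a)) ?_
      (fun b hb => one_mem_sem_of_dEdge S (Finset.mem_filter.1 hb).2) (fun b hb => ?_) ?_
    · simp [Function.comp_def, lab_depTree]
    · simp [not_not.1 (by simpa using hb : ¬ dEdge S a b), Mult.sem]
    · simp only [List.mem_map]
      rintro _ ⟨b, -, rfl⟩
      exact ih b

end Backward

/-- Lemma 7(1): a twig query is satisfiable by a pruned
disjunction-free multiplicity schema iff it embeds in the dependency graph. -/
theorem query_satisfiability_iff_embedding_in_dependency_graph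
    {α : Type} [Fintype α] [DecidableEq α] (S : MS α)
    (hpruned : ∀ a : α, ¬ Relation.TransGen (uEdge S) a a)
    (q : Twig α) :
    (∃ t : UTree α, SatS S t ∧ Sat t q) ↔ QGEmb (dEdge S) S.root q := by
  constructor
  · rintro ⟨t, ⟨hroot, hlocal⟩, hsat⟩
    exact hroot ▸ qgEmb_of_localOK_of_sat q hlocal hsat
  · intro h
    have hwf := wellFounded_swap_uEdge S hpruned
    obtain ⟨n, hn⟩ := (eventually_sat_depTree_of_qgEmb S hwf q h).exists
    exact ⟨_, ⟨lab_depTree S hwf n S.root, localOK_depTree S hwf n S.root⟩, hn⟩
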